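/- Let G∞ = (V,E) with V = {v₀, v_g}, v₀ ≠ v_g, and E = {(v₀,v_g)}. Then: (a) there exist positional strategies σ_r, σ_d in S^tb(G∞) such that every play of S^tb(G∞) from ((E,v₀),r) consistent with both contains a state whose runner position is v_g; but (b) there do not exist positional strategies σ_r, σ_d in S^con(G∞) such that every play of S^con(G∞) from (E,v₀) consistent with both contains a state whose runner position is v_g. Hence the converse of the implication from concurrent to turn-based joint enforceability of F g fails. -/
import Mathlib


/-- A sabotage game-state: the set of remaining edges together with the runner's position. -/
abbrev GState (V : Type*) := Finset (V × V) × V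

/-- The two agents: runner and demon. -/
inductive Agent : Type
  | r : Agent
  | d : Agent
deriving DecidableEq

/-- A state of the turn-based sabotage game structure: a game-state plus the agent owning it. -/
abbrev TbState (V : Type*) := GState V × Agent

section Defs

variable {V : Type*} [DecidableEq V]

/-- Runner's available actions in the turn-based structure (`none` is skip). -/
def tbActR (s : TbState V) : Set (Option (V × V)) :=
  match s.2 with
  | Agent.r => {a | ∃ e ∈ s.1.1, e.1 = s.1.2 ∧ a = some e}
  | Agent.d => {none}

/-- Demon's available actions in the turn-based structure (`none` is skip). -/
def tbActD (s : TbState V) : Set (Option (V × V)) :=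
  match s.2 with
  | Agent.r => {none}
  | Agent.d => {a | ∃ e ∈ s.1.1, a = some e}

/-- Transition function of the turn-based sabotage game structure. -/
def tbDelta (s : TbState V) (ar ad : Option (V × V)) : TbState V :=
  match ar, ad with
  | some e, _ => ((s.1.1, e.2), Agent.d)
  | none, some e => ((s.1.1.erase e, s.1.2), Agent.r)
  | none, none => s

/-- `t` arises from `s` in the turn-based structure by the available action pair `(ar, ad)`. -/
def tbStepBy (s : TbState V) (ar ad : Option (V × V)) (t : TbState V) : Prop :=
  ar ∈ tbActR s ∧ ad ∈ tbActD s ∧ t = tbDelta s ar ad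

/-- One-step transition relation of the turn-based structure. -/
def tbStep (s t : TbState V) : Prop := ∃ ar ad, tbStepBy s ar ad t

/-- Runner's available actions in the concurrent structure. -/
def conActR (s : GState V) : Set (V × V) := {e | e ∈ s.1 ∧ e.1 = s.2}

/-- Demon's available actions in the concurrent structure. -/
def conActD (s : GState V) : Set (V × V) := {e | e ∈ s.1}

/-- Transition function of the concurrent sabotage game structure. -/
def conDelta (s : GState V) (er ed : V × V) : GState V :=
  if er = ed then s else (s.1.erase ed, er.2)

/-- `t` arises from `s` in the concurrent structure by the available action pair `(er, ed)`. -/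
def conStepBy (s : GState V) (er ed : V × V) (t : GState V) : Prop :=
  er ∈ s.1 ∧ er.1 = s.2 ∧ ed ∈ s.1 ∧ t = conDelta s er ed

/-- One-step transition relation of the concurrent structure. -/
def conStep (s t : GState V) : Prop := ∃ er ed, conStepBy s er ed t

/-- Runner's available actions in the general structure (`none` is skip, always available). -/
def genActR (s : GState V) : Set (Option (V × V)) :=
  {a | a = none ∨ ∃ e ∈ s.1, e.1 = s.2 ∧ a = some e}

/-- Demon's available actions in the general structure (`none` is skip, always available). -/
def genActD (s : GState V) : Set (Option (V × V)) :=
  {a | a = none ∨ ∃ e ∈ s.1, a = some e}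

/-- Transition function of the general sabotage game structure. -/
def genDelta (s : GState V) (ar ad : Option (V × V)) : GState V :=
  match ar, ad with
  | none, none => s
  | none, some ed => (s.1.erase ed, s.2)
  | some er, none => (s.1, er.2)
  | some er, some ed => if er = ed then s else (s.1.erase ed, er.2)

/-- `t` arises from `s` in the general structure by the available action pair `(ar, ad)`. -/
def genStepBy (s : GState V) (ar ad : Option (V × V)) (t : GState V) : Prop :=
  ar ∈ genActR s ∧ ad ∈ genActD s ∧ t = genDelta s ar ad

/-- One-step transition relation of the general structure. -/
def genStep (s t : GState V) : Prop := ∃ ar ad, genStepBy s ar ad t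

/-- A (finite or infinite) play: a maximal sequence of states starting at `s₀`, where each state
arises from its predecessor by the step relation. `p n = none` means the play has already ended. -/
def IsPlay {S : Type*} (step : S → S → Prop) (s₀ : S) (p : ℕ → Option S) : Prop :=
  p 0 = some s₀ ∧
  (∀ n t, p (n + 1) = some t → ∃ s, p n = some s ∧ step s t) ∧
  (∀ n s, p n = some s → (∃ t, step s t) → (p (n + 1)).isSome)

/-- The structural label of a game-state `(E', v)`: the proposition `p_v` (coded `Sum.inl v`)
together with the propositions `q_e` for `e ∈ E'` (coded `Sum.inr e`). -/
def label (s : GState V) : Set (V ⊕ (V × V)) :=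
  {x | x = Sum.inl s.2 ∨ ∃ e ∈ s.1, x = Sum.inr e}

/-- `σ` is a positional runner strategy in the turn-based structure. -/
def TbStratR (σ : TbState V → Option (V × V)) : Prop :=
  ∀ s, (tbActR s).Nonempty → σ s ∈ tbActR s

/-- `σ` is a positional demon strategy in the turn-based structure. -/
def TbStratD (σ : TbState V → Option (V × V)) : Prop :=
  ∀ s, (tbActD s).Nonempty → σ s ∈ tbActD s

/-- The play `p` is consistent with the runner strategy `σ` in the turn-based structure. -/
def TbConsR (σ : TbState V → Option (V × V)) (p : ℕ → Option (TbState V)) : Prop :=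
  ∀ n s t, p n = some s → p (n + 1) = some t → ∃ ad, tbStepBy s (σ s) ad t

/-- The play `p` is consistent with the demon strategy `σ` in the turn-based structure. -/
def TbConsD (σ : TbState V → Option (V × V)) (p : ℕ → Option (TbState V)) : Prop :=
  ∀ n s t, p n = some s → p (n + 1) = some t → ∃ ar, tbStepBy s ar (σ s) t

/-- The play `p` is consistent with both strategies in the turn-based structure. -/
def TbConsRD (σr σd : TbState V → Option (V × V)) (p : ℕ → Option (TbState V)) : Prop :=
  ∀ n s t, p n = some s → p (n + 1) = some t → tbStepBy s (σr s) (σd s) t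

/-- `σ` is a positional runner strategy in the concurrent structure. -/
def ConStratR (σ : GState V → V × V) : Prop :=
  ∀ s, (conActR s).Nonempty → σ s ∈ conActR s

/-- `σ` is a positional demon strategy in the concurrent structure. -/
def ConStratD (σ : GState V → V × V) : Prop :=
  ∀ s, (conActD s).Nonempty → σ s ∈ conActD s

/-- The play `p` is consistent with both strategies in the concurrent structure. -/
def ConConsRD (σr σd : GState V → V × V) (p : ℕ → Option (GState V)) : Prop :=
  ∀ n s t, p n = some s → p (n + 1) = some t → conStepBy s (σr s) (σd s) t

/-- Runner has a winning strategy in the turn-based reachability sabotage game with goal `vg`,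
from the game-state `(E', v)`. -/
def Reach (vg : V) (E' : Finset (V × V)) (v : V) : Prop :=
  v = vg ∨ ∃ e ∈ E', e.1 = v ∧ ∀ f ∈ E', Reach vg (E'.erase f) e.2
termination_by E'.card
decreasing_by exact Finset.card_erase_lt_of_mem (by assumption)

/-- Runner has a winning strategy in the turn-based liveness sabotage game with liveness
parameter `b ≥ 1`, from the game-state `(E', v)`. -/
def Live : ℕ → Finset (V × V) → V → Prop
  | 0, _, _ => True
  | 1, E', v => ∃ e ∈ E', e.1 = v
  | n + 2, E', v => ∃ e ∈ E', e.1 = v ∧ ∀ f ∈ E', Live (n + 1) (E'.erase f) e.2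

end Defs

/-- Formulas of sabotage modal logic over a set `P` of propositions. -/
inductive SML (P : Type*) : Type _
  | top : SML P
  | atom : P → SML P
  | neg : SML P → SML P
  | and : SML P → SML P → SML P
  | dia : SML P → SML P
  | sab : SML P → SML P

namespace SML
/-- Disjunction. -/
def or {P : Type*} (φ ψ : SML P) : SML P := .neg (.and (.neg φ) (.neg ψ))
/-- Box. -/
def box {P : Type*} (φ : SML P) : SML P := .neg (.dia (.neg φ))
/-- Sabotage box `■`. -/
def sabBox {P : Type*} (φ : SML P) : SML P := .neg (.sab (.neg φ))
end SML

/-- Truth of an SML formula at world `w` of the sabotage model `(W, R, Val)`. -/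
def Sat {W P : Type*} [DecidableEq W] (Val : P → Set W) :
    SML P → Finset (W × W) → W → Prop
  | .top, _, _ => True
  | .atom q, _, w => w ∈ Val q
  | .neg φ, R, w => ¬ Sat Val φ R w
  | .and φ ψ, R, w => Sat Val φ R w ∧ Sat Val ψ R w
  | .dia φ, R, w => ∃ u, (w, u) ∈ R ∧ Sat Val φ R u
  | .sab φ, R, w => ∃ x ∈ R, Sat Val φ (R.erase x) w

/-- The formulas `ρ₀ := g`, `ρ_{n+1} := g ∨ ◇■ρ_n`, over the single proposition `g`. -/
def rho : ℕ → SML Unit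
  | 0 => .atom ()
  | n + 1 => SML.or (.atom ()) (.dia (SML.sabBox (rho n)))

/-- The formulas `γ₁ := ◇⊤`, `γ_{n+1} := ◇■γ_n` (the value at `0` is a dummy). -/
def gamma : ℕ → SML Unit
  | 0 => .top
  | 1 => .dia .top
  | n + 2 => .dia (SML.sabBox (gamma (n + 1)))

/-- For the graph `G∞` with vertices `{v₀, v_g}` (distinct) and single edge
`(v₀, v_g)`: (a) in the turn-based structure the coalition `{r, d}` can jointly enforce
reaching `v_g` from `((E, v₀), r)`; but (b) in the concurrent structure it cannot from
`(E, v₀)`. -/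
theorem Ginfty_tb_joint_Fg_but_not_con {V : Type*} [DecidableEq V] [Fintype V]
    (v₀ vg : V) (hne : v₀ ≠ vg) (hV : ∀ v : V, v = v₀ ∨ v = vg) :
    (∃ σr σd : TbState V → Option (V × V), TbStratR σr ∧ TbStratD σd ∧
      ∀ p : ℕ → Option (TbState V),
        IsPlay tbStep ((({(v₀, vg)} : Finset (V × V)), v₀), Agent.r) p → TbConsRD σr σd p →
          ∃ n s, p n = some s ∧ s.1.2 = vg) ∧
    ¬ (∃ σr σd : GState V → V × V, ConStratR σr ∧ ConStratD σd ∧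
      ∀ p : ℕ → Option (GState V),
        IsPlay conStep (({(v₀, vg)} : Finset (V × V)), v₀) p → ConConsRD σr σd p →
          ∃ n s, p n = some s ∧ s.2 = vg) := by

  classical
  constructor
  · -- turn-based: joint enforceability
    refine ⟨fun s => if h : (tbActR s).Nonempty then h.some else none,
            fun s => if h : (tbActD s).Nonempty then h.some else none,
            fun s hs => by simp only []; rw [dif_pos hs]; exact hs.some_mem,
            fun s hs => by simp only []; rw [dif_pos hs]; exact hs.some_mem, ?_⟩
    intro p hp hcons
    set s0 : TbState V := ((({(v₀, vg)} : Finset (V × V)), v₀), Agent.r) with hs0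
    -- there is a step from s0
    have hstep : ∃ t, tbStep s0 t := by
      refine ⟨((({(v₀, vg)} : Finset (V × V)), vg), Agent.d), some (v₀, vg), none, ?_, ?_, rfl⟩
      · exact ⟨(v₀, vg), Finset.mem_singleton_self _, rfl, rfl⟩
      · exact rfl
    have h1 : (p 1).isSome := hp.2.2 0 s0 hp.1 hstep
    obtain ⟨t, ht⟩ := Option.isSome_iff_exists.mp h1
    have hby := hcons 0 s0 t hp.1 ht
    obtain ⟨har, _, hdelta⟩ := hby
    -- identify the runner action
    obtain ⟨e, he, he1, heq⟩ := har
    have he' : e = (v₀, vg) := Finset.mem_singleton.mp he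
    refine ⟨1, t, ht, ?_⟩
    rw [hdelta, heq, he']
    rfl
  · -- concurrent: not enforceable
    rintro ⟨σr, σd, hσr, hσd, hwin⟩
    set s0 : GState V := (({(v₀, vg)} : Finset (V × V)), v₀) with hs0
    have hr : σr s0 = (v₀, vg) := by
      have hne' : (conActR s0).Nonempty :=
        ⟨(v₀, vg), Finset.mem_singleton_self _, rfl⟩
      have := hσr s0 hne'
      exact Finset.mem_singleton.mp this.1
    have hd : σd s0 = (v₀, vg) := by
      have hne' : (conActD s0).Nonempty := ⟨(v₀, vg), Finset.mem_singleton_self _⟩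
      have := hσd s0 hne'
      exact Finset.mem_singleton.mp this
    have hself : conStepBy s0 (σr s0) (σd s0) s0 := by
      refine ⟨?_, ?_, ?_, ?_⟩
      · rw [hr]; exact Finset.mem_singleton_self _
      · rw [hr]
      · rw [hd]; exact Finset.mem_singleton_self _
      · rw [conDelta, if_pos (by rw [hr, hd])]
    -- the constant play
    have hplay : IsPlay conStep s0 (fun _ => some s0) := by
      refine ⟨rfl, ?_, ?_⟩
      · intro n t hteq
        exact ⟨s0, rfl, (Option.some_inj.mp hteq) ▸
          ⟨σr s0, σd s0, hself⟩⟩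
      · intro n s _ _; exact rfl
    have hcons : ConConsRD σr σd (fun _ => some s0) := by
      intro n s t hs ht
      have h1 : s = s0 := Option.some_inj.mp hs.symm
      have h2 : t = s0 := Option.some_inj.mp ht.symm
      rw [h1, h2]; exact hself
    obtain ⟨n, s, hsn, hsg⟩ := hwin _ hplay hcons
    have : s = s0 := Option.some_inj.mp hsn.symm
    rw [this] at hsg
    exact hne hsg
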